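/- The sublattice of simultaneous fixed elements of the divisor representation, {y ∈ L′ : g₁·y = y and g₂·y = y}, is free of rank 3 and equals the ℤ-span of the classes of (f,0), (t,0) and (0,t). (These are the invariant divisor classes φ, τ₁, τ₂ generating H²(X̃,ℤ)^G ≅ ℤ³.) -/
import Mathlib


open Matrix

/-- The generator `g₁` of the ℤ₃×ℤ₃ action on the degree-2 homology lattice of the
ℤ₃×ℤ₃-symmetric dP₉ surface, in the basis (σ, f, θ₁₁, θ₂₁, θ₃₁, θ₃₂, θ₄₁, θ₄₂, μ, ν). -/
def g1mat : Matrix (Fin 10) (Fin 10) ℤ :=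
  !![0,0,0,3,0,0,0,0,-1,-1;
     0,1,0,3,0,1,0,1,-1,-1;
     0,0,1,0,0,0,0,0,0,0;
     0,0,0,-2,0,0,0,0,1,0;
     0,0,0,-2,0,-1,0,0,1,1;
     0,0,0,-1,1,-1,0,0,0,1;
     0,0,0,-2,0,0,0,-1,1,1;
     0,0,0,-1,0,0,1,-1,0,0;
     1,0,0,-3,0,0,0,0,2,1;
     0,0,0,0,0,0,0,0,0,1]

/-- The generator `g₂` of the ℤ₃×ℤ₃ action. -/
def g2mat : Matrix (Fin 10) (Fin 10) ℤ :=
  !![0,0,3,0,0,0,0,0,-1,-1;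
     0,1,3,0,1,0,0,1,-1,-1;
     0,0,-2,0,0,0,0,0,0,1;
     0,0,0,1,0,0,0,0,0,0;
     0,0,-1,0,-1,1,0,0,1,0;
     0,0,-2,0,-1,0,0,0,1,1;
     0,0,-2,0,0,0,0,-1,1,1;
     0,0,-1,0,0,0,1,-1,0,0;
     0,0,0,0,0,0,0,0,1,0;
     1,0,-3,0,0,0,0,0,1,2]

/-- The fiber class `f`. -/
def fvec : Fin 10 → ℤ := ![0,1,0,0,0,0,0,0,0,0]

/-- The ambient rank-20 lattice ℤ¹⁰ ⊕ ℤ¹⁰. -/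
abbrev Wlat := (Fin 10 → ℤ) × (Fin 10 → ℤ)

/-- The linear form ℓ(x) = x₁ + x₉ + x₁₀. -/
def ell (x : Fin 10 → ℤ) : ℤ := x 0 + x 8 + x 9

/-- The diagonal action of a matrix `g` on ℤ¹⁰ ⊕ ℤ¹⁰. -/
def act (g : Matrix (Fin 10) (Fin 10) ℤ) (x : Wlat) : Wlat :=
  (g.mulVec x.1, g.mulVec x.2)

/-- The rank-19 lattice `L = {(a,b) : ℓ(a) = ℓ(b)}` realizing the curve
representation `R = H₂(X̃,ℤ)` of ℤ₃×ℤ₃ on the curve classes of the covering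
Calabi-Yau threefold `X̃`. -/
def Lsub : Submodule ℤ Wlat where
  carrier := {x | ell x.1 = ell x.2}
  add_mem' := by
    intro a b ha hb
    simp only [Set.mem_setOf_eq, ell, Prod.fst_add, Prod.snd_add, Pi.add_apply] at *
    omega
  zero_mem' := by simp [ell]
  smul_mem' := by
    intro c x hx
    simp only [Set.mem_setOf_eq, ell, Prod.smul_fst, Prod.smul_snd, Pi.smul_apply,
      smul_eq_mul] at *
    linear_combination c * hx

/-- The class `t`, pull-back of the hyperplane class. -/
def tvec : Fin 10 → ℤ := ![-3,-3,1,1,2,2,3,1,3,3]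

/-- The relation submodule `ℤ·(f,−f)`. -/
def Ksub : Submodule ℤ Wlat := Submodule.span ℤ {((fvec, -fvec) : Wlat)}

/-- The rank-19 lattice `L′ = (ℤ¹⁰ ⊕ ℤ¹⁰)/ℤ·(f,−f)` realizing the divisor
representation `R^∨ = H₄(X̃,ℤ)`. -/
abbrev Lquot := Wlat ⧸ Ksub

lemma sum9 {M : Type*} [AddCommMonoid M] (f : Fin 9 → M) :
    ∑ i, f i = f 0 + f 1 + f 2 + f 3 + f 4 + f 5 + f 6 + f 7 + f 8 := by
  rw [Fin.sum_univ_castSucc, Fin.sum_univ_eight]; rfl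
lemma sum10 {M : Type*} [AddCommMonoid M] (f : Fin 10 → M) :
    ∑ i, f i = f 0 + f 1 + f 2 + f 3 + f 4 + f 5 + f 6 + f 7 + f 8 + f 9 := by
  rw [Fin.sum_univ_castSucc, sum9]; rfl

set_option maxHeartbeats 2000000 in
lemma key (u : Fin 10 → ℤ) (a b : ℤ)
    (h1 : g1mat.mulVec u - u = a • fvec) (h2 : g2mat.mulVec u - u = b • fvec) :
    u = (u 1 + 3 * u 2) • fvec + (u 2) • tvec := by
  have e0 := congrFun h1 0; have e1 := congrFun h1 1; have e2 := congrFun h1 2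
  have e3 := congrFun h1 3; have e4 := congrFun h1 4; have e5 := congrFun h1 5
  have e6 := congrFun h1 6; have e7 := congrFun h1 7; have e8 := congrFun h1 8
  have e9 := congrFun h1 9
  have f0 := congrFun h2 0; have f1 := congrFun h2 1; have f2 := congrFun h2 2
  have f3 := congrFun h2 3; have f4 := congrFun h2 4; have f5 := congrFun h2 5
  have f6 := congrFun h2 6; have f7 := congrFun h2 7; have f8 := congrFun h2 8
  have f9 := congrFun h2 9
  simp only [Matrix.mulVec, dotProduct, sum10, Pi.sub_apply, Pi.smul_apply,
    smul_eq_mul,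
    show (g1mat 0 0 : ℤ) = 0 from rfl,
    show (g1mat 0 1 : ℤ) = 0 from rfl,
    show (g1mat 0 2 : ℤ) = 0 from rfl,
    show (g1mat 0 3 : ℤ) = 3 from rfl,
    show (g1mat 0 4 : ℤ) = 0 from rfl,
    show (g1mat 0 5 : ℤ) = 0 from rfl,
    show (g1mat 0 6 : ℤ) = 0 from rfl,
    show (g1mat 0 7 : ℤ) = 0 from rfl,
    show (g1mat 0 8 : ℤ) = (-1) from rfl,
    show (g1mat 0 9 : ℤ) = (-1) from rfl,
    show (g1mat 1 0 : ℤ) = 0 from rfl,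
    show (g1mat 1 1 : ℤ) = 1 from rfl,
    show (g1mat 1 2 : ℤ) = 0 from rfl,
    show (g1mat 1 3 : ℤ) = 3 from rfl,
    show (g1mat 1 4 : ℤ) = 0 from rfl,
    show (g1mat 1 5 : ℤ) = 1 from rfl,
    show (g1mat 1 6 : ℤ) = 0 from rfl,
    show (g1mat 1 7 : ℤ) = 1 from rfl,
    show (g1mat 1 8 : ℤ) = (-1) from rfl,
    show (g1mat 1 9 : ℤ) = (-1) from rfl,
    show (g1mat 2 0 : ℤ) = 0 from rfl,
    show (g1mat 2 1 : ℤ) = 0 from rfl,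
    show (g1mat 2 2 : ℤ) = 1 from rfl,
    show (g1mat 2 3 : ℤ) = 0 from rfl,
    show (g1mat 2 4 : ℤ) = 0 from rfl,
    show (g1mat 2 5 : ℤ) = 0 from rfl,
    show (g1mat 2 6 : ℤ) = 0 from rfl,
    show (g1mat 2 7 : ℤ) = 0 from rfl,
    show (g1mat 2 8 : ℤ) = 0 from rfl,
    show (g1mat 2 9 : ℤ) = 0 from rfl,
    show (g1mat 3 0 : ℤ) = 0 from rfl,
    show (g1mat 3 1 : ℤ) = 0 from rfl,
    show (g1mat 3 2 : ℤ) = 0 from rfl,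
    show (g1mat 3 3 : ℤ) = (-2) from rfl,
    show (g1mat 3 4 : ℤ) = 0 from rfl,
    show (g1mat 3 5 : ℤ) = 0 from rfl,
    show (g1mat 3 6 : ℤ) = 0 from rfl,
    show (g1mat 3 7 : ℤ) = 0 from rfl,
    show (g1mat 3 8 : ℤ) = 1 from rfl,
    show (g1mat 3 9 : ℤ) = 0 from rfl,
    show (g1mat 4 0 : ℤ) = 0 from rfl,
    show (g1mat 4 1 : ℤ) = 0 from rfl,
    show (g1mat 4 2 : ℤ) = 0 from rfl,
    show (g1mat 4 3 : ℤ) = (-2) from rfl,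
    show (g1mat 4 4 : ℤ) = 0 from rfl,
    show (g1mat 4 5 : ℤ) = (-1) from rfl,
    show (g1mat 4 6 : ℤ) = 0 from rfl,
    show (g1mat 4 7 : ℤ) = 0 from rfl,
    show (g1mat 4 8 : ℤ) = 1 from rfl,
    show (g1mat 4 9 : ℤ) = 1 from rfl,
    show (g1mat 5 0 : ℤ) = 0 from rfl,
    show (g1mat 5 1 : ℤ) = 0 from rfl,
    show (g1mat 5 2 : ℤ) = 0 from rfl,
    show (g1mat 5 3 : ℤ) = (-1) from rfl,
    show (g1mat 5 4 : ℤ) = 1 from rfl,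
    show (g1mat 5 5 : ℤ) = (-1) from rfl,
    show (g1mat 5 6 : ℤ) = 0 from rfl,
    show (g1mat 5 7 : ℤ) = 0 from rfl,
    show (g1mat 5 8 : ℤ) = 0 from rfl,
    show (g1mat 5 9 : ℤ) = 1 from rfl,
    show (g1mat 6 0 : ℤ) = 0 from rfl,
    show (g1mat 6 1 : ℤ) = 0 from rfl,
    show (g1mat 6 2 : ℤ) = 0 from rfl,
    show (g1mat 6 3 : ℤ) = (-2) from rfl,
    show (g1mat 6 4 : ℤ) = 0 from rfl,
    show (g1mat 6 5 : ℤ) = 0 from rfl,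
    show (g1mat 6 6 : ℤ) = 0 from rfl,
    show (g1mat 6 7 : ℤ) = (-1) from rfl,
    show (g1mat 6 8 : ℤ) = 1 from rfl,
    show (g1mat 6 9 : ℤ) = 1 from rfl,
    show (g1mat 7 0 : ℤ) = 0 from rfl,
    show (g1mat 7 1 : ℤ) = 0 from rfl,
    show (g1mat 7 2 : ℤ) = 0 from rfl,
    show (g1mat 7 3 : ℤ) = (-1) from rfl,
    show (g1mat 7 4 : ℤ) = 0 from rfl,
    show (g1mat 7 5 : ℤ) = 0 from rfl,
    show (g1mat 7 6 : ℤ) = 1 from rfl,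
    show (g1mat 7 7 : ℤ) = (-1) from rfl,
    show (g1mat 7 8 : ℤ) = 0 from rfl,
    show (g1mat 7 9 : ℤ) = 0 from rfl,
    show (g1mat 8 0 : ℤ) = 1 from rfl,
    show (g1mat 8 1 : ℤ) = 0 from rfl,
    show (g1mat 8 2 : ℤ) = 0 from rfl,
    show (g1mat 8 3 : ℤ) = (-3) from rfl,
    show (g1mat 8 4 : ℤ) = 0 from rfl,
    show (g1mat 8 5 : ℤ) = 0 from rfl,
    show (g1mat 8 6 : ℤ) = 0 from rfl,
    show (g1mat 8 7 : ℤ) = 0 from rfl,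
    show (g1mat 8 8 : ℤ) = 2 from rfl,
    show (g1mat 8 9 : ℤ) = 1 from rfl,
    show (g1mat 9 0 : ℤ) = 0 from rfl,
    show (g1mat 9 1 : ℤ) = 0 from rfl,
    show (g1mat 9 2 : ℤ) = 0 from rfl,
    show (g1mat 9 3 : ℤ) = 0 from rfl,
    show (g1mat 9 4 : ℤ) = 0 from rfl,
    show (g1mat 9 5 : ℤ) = 0 from rfl,
    show (g1mat 9 6 : ℤ) = 0 from rfl,
    show (g1mat 9 7 : ℤ) = 0 from rfl,
    show (g1mat 9 8 : ℤ) = 0 from rfl,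
    show (g1mat 9 9 : ℤ) = 1 from rfl,
    show (g2mat 0 0 : ℤ) = 0 from rfl,
    show (g2mat 0 1 : ℤ) = 0 from rfl,
    show (g2mat 0 2 : ℤ) = 3 from rfl,
    show (g2mat 0 3 : ℤ) = 0 from rfl,
    show (g2mat 0 4 : ℤ) = 0 from rfl,
    show (g2mat 0 5 : ℤ) = 0 from rfl,
    show (g2mat 0 6 : ℤ) = 0 from rfl,
    show (g2mat 0 7 : ℤ) = 0 from rfl,
    show (g2mat 0 8 : ℤ) = (-1) from rfl,
    show (g2mat 0 9 : ℤ) = (-1) from rfl,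
    show (g2mat 1 0 : ℤ) = 0 from rfl,
    show (g2mat 1 1 : ℤ) = 1 from rfl,
    show (g2mat 1 2 : ℤ) = 3 from rfl,
    show (g2mat 1 3 : ℤ) = 0 from rfl,
    show (g2mat 1 4 : ℤ) = 1 from rfl,
    show (g2mat 1 5 : ℤ) = 0 from rfl,
    show (g2mat 1 6 : ℤ) = 0 from rfl,
    show (g2mat 1 7 : ℤ) = 1 from rfl,
    show (g2mat 1 8 : ℤ) = (-1) from rfl,
    show (g2mat 1 9 : ℤ) = (-1) from rfl,
    show (g2mat 2 0 : ℤ) = 0 from rfl,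
    show (g2mat 2 1 : ℤ) = 0 from rfl,
    show (g2mat 2 2 : ℤ) = (-2) from rfl,
    show (g2mat 2 3 : ℤ) = 0 from rfl,
    show (g2mat 2 4 : ℤ) = 0 from rfl,
    show (g2mat 2 5 : ℤ) = 0 from rfl,
    show (g2mat 2 6 : ℤ) = 0 from rfl,
    show (g2mat 2 7 : ℤ) = 0 from rfl,
    show (g2mat 2 8 : ℤ) = 0 from rfl,
    show (g2mat 2 9 : ℤ) = 1 from rfl,
    show (g2mat 3 0 : ℤ) = 0 from rfl,
    show (g2mat 3 1 : ℤ) = 0 from rfl,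
    show (g2mat 3 2 : ℤ) = 0 from rfl,
    show (g2mat 3 3 : ℤ) = 1 from rfl,
    show (g2mat 3 4 : ℤ) = 0 from rfl,
    show (g2mat 3 5 : ℤ) = 0 from rfl,
    show (g2mat 3 6 : ℤ) = 0 from rfl,
    show (g2mat 3 7 : ℤ) = 0 from rfl,
    show (g2mat 3 8 : ℤ) = 0 from rfl,
    show (g2mat 3 9 : ℤ) = 0 from rfl,
    show (g2mat 4 0 : ℤ) = 0 from rfl,
    show (g2mat 4 1 : ℤ) = 0 from rfl,
    show (g2mat 4 2 : ℤ) = (-1) from rfl,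
    show (g2mat 4 3 : ℤ) = 0 from rfl,
    show (g2mat 4 4 : ℤ) = (-1) from rfl,
    show (g2mat 4 5 : ℤ) = 1 from rfl,
    show (g2mat 4 6 : ℤ) = 0 from rfl,
    show (g2mat 4 7 : ℤ) = 0 from rfl,
    show (g2mat 4 8 : ℤ) = 1 from rfl,
    show (g2mat 4 9 : ℤ) = 0 from rfl,
    show (g2mat 5 0 : ℤ) = 0 from rfl,
    show (g2mat 5 1 : ℤ) = 0 from rfl,
    show (g2mat 5 2 : ℤ) = (-2) from rfl,
    show (g2mat 5 3 : ℤ) = 0 from rfl,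
    show (g2mat 5 4 : ℤ) = (-1) from rfl,
    show (g2mat 5 5 : ℤ) = 0 from rfl,
    show (g2mat 5 6 : ℤ) = 0 from rfl,
    show (g2mat 5 7 : ℤ) = 0 from rfl,
    show (g2mat 5 8 : ℤ) = 1 from rfl,
    show (g2mat 5 9 : ℤ) = 1 from rfl,
    show (g2mat 6 0 : ℤ) = 0 from rfl,
    show (g2mat 6 1 : ℤ) = 0 from rfl,
    show (g2mat 6 2 : ℤ) = (-2) from rfl,
    show (g2mat 6 3 : ℤ) = 0 from rfl,
    show (g2mat 6 4 : ℤ) = 0 from rfl,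
    show (g2mat 6 5 : ℤ) = 0 from rfl,
    show (g2mat 6 6 : ℤ) = 0 from rfl,
    show (g2mat 6 7 : ℤ) = (-1) from rfl,
    show (g2mat 6 8 : ℤ) = 1 from rfl,
    show (g2mat 6 9 : ℤ) = 1 from rfl,
    show (g2mat 7 0 : ℤ) = 0 from rfl,
    show (g2mat 7 1 : ℤ) = 0 from rfl,
    show (g2mat 7 2 : ℤ) = (-1) from rfl,
    show (g2mat 7 3 : ℤ) = 0 from rfl,
    show (g2mat 7 4 : ℤ) = 0 from rfl,
    show (g2mat 7 5 : ℤ) = 0 from rfl,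
    show (g2mat 7 6 : ℤ) = 1 from rfl,
    show (g2mat 7 7 : ℤ) = (-1) from rfl,
    show (g2mat 7 8 : ℤ) = 0 from rfl,
    show (g2mat 7 9 : ℤ) = 0 from rfl,
    show (g2mat 8 0 : ℤ) = 0 from rfl,
    show (g2mat 8 1 : ℤ) = 0 from rfl,
    show (g2mat 8 2 : ℤ) = 0 from rfl,
    show (g2mat 8 3 : ℤ) = 0 from rfl,
    show (g2mat 8 4 : ℤ) = 0 from rfl,
    show (g2mat 8 5 : ℤ) = 0 from rfl,
    show (g2mat 8 6 : ℤ) = 0 from rfl,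
    show (g2mat 8 7 : ℤ) = 0 from rfl,
    show (g2mat 8 8 : ℤ) = 1 from rfl,
    show (g2mat 8 9 : ℤ) = 0 from rfl,
    show (g2mat 9 0 : ℤ) = 1 from rfl,
    show (g2mat 9 1 : ℤ) = 0 from rfl,
    show (g2mat 9 2 : ℤ) = (-3) from rfl,
    show (g2mat 9 3 : ℤ) = 0 from rfl,
    show (g2mat 9 4 : ℤ) = 0 from rfl,
    show (g2mat 9 5 : ℤ) = 0 from rfl,
    show (g2mat 9 6 : ℤ) = 0 from rfl,
    show (g2mat 9 7 : ℤ) = 0 from rfl,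
    show (g2mat 9 8 : ℤ) = 1 from rfl,
    show (g2mat 9 9 : ℤ) = 2 from rfl,
    show (fvec 0 : ℤ) = 0 from rfl,
    show (fvec 1 : ℤ) = 1 from rfl,
    show (fvec 2 : ℤ) = 0 from rfl,
    show (fvec 3 : ℤ) = 0 from rfl,
    show (fvec 4 : ℤ) = 0 from rfl,
    show (fvec 5 : ℤ) = 0 from rfl,
    show (fvec 6 : ℤ) = 0 from rfl,
    show (fvec 7 : ℤ) = 0 from rfl,
    show (fvec 8 : ℤ) = 0 from rfl,
    show (fvec 9 : ℤ) = 0 from rfl,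
    show (tvec 0 : ℤ) = (-3) from rfl,
    show (tvec 1 : ℤ) = (-3) from rfl,
    show (tvec 2 : ℤ) = 1 from rfl,
    show (tvec 3 : ℤ) = 1 from rfl,
    show (tvec 4 : ℤ) = 2 from rfl,
    show (tvec 5 : ℤ) = 2 from rfl,
    show (tvec 6 : ℤ) = 3 from rfl,
    show (tvec 7 : ℤ) = 1 from rfl,
    show (tvec 8 : ℤ) = 3 from rfl,
    show (tvec 9 : ℤ) = 3 from rfl] at e0 e1 e2 e3 e4 e5 e6 e7 e8 e9 f0 f1 f2 f3 f4 f5 f6 f7 f8 f9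
  funext i
  fin_cases i <;>
    simp [Pi.add_apply, Pi.smul_apply, smul_eq_mul,
      show (fvec 0 : ℤ) = 0 from rfl,
      show (fvec 1 : ℤ) = 1 from rfl,
      show (fvec 2 : ℤ) = 0 from rfl,
      show (fvec 3 : ℤ) = 0 from rfl,
      show (fvec 4 : ℤ) = 0 from rfl,
      show (fvec 5 : ℤ) = 0 from rfl,
      show (fvec 6 : ℤ) = 0 from rfl,
      show (fvec 7 : ℤ) = 0 from rfl,
      show (fvec 8 : ℤ) = 0 from rfl,
      show (fvec 9 : ℤ) = 0 from rfl,
      show (tvec 0 : ℤ) = (-3) from rfl,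
      show (tvec 1 : ℤ) = (-3) from rfl,
      show (tvec 2 : ℤ) = 1 from rfl,
      show (tvec 3 : ℤ) = 1 from rfl,
      show (tvec 4 : ℤ) = 2 from rfl,
      show (tvec 5 : ℤ) = 2 from rfl,
      show (tvec 6 : ℤ) = 3 from rfl,
      show (tvec 7 : ℤ) = 1 from rfl,
      show (tvec 8 : ℤ) = 3 from rfl,
      show (tvec 9 : ℤ) = 3 from rfl] <;>
    omega

lemma g1f : g1mat.mulVec fvec = fvec := by decide
lemma g1t : g1mat.mulVec tvec = tvec := by decide
lemma g2f : g2mat.mulVec fvec = fvec := by decide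
lemma g2t : g2mat.mulVec tvec = tvec := by decide

lemma act_add (g : Matrix (Fin 10) (Fin 10) ℤ) (p q : Wlat) :
    act g (p + q) = act g p + act g q := by
  simp [act, Matrix.mulVec_add, Prod.ext_iff]

lemma act_smul (g : Matrix (Fin 10) (Fin 10) ℤ) (c : ℤ) (p : Wlat) :
    act g (c • p) = c • act g p := by
  simp only [act, Prod.smul_fst, Prod.smul_snd, Matrix.mulVec_smul, Prod.smul_mk]

def psi : Wlat →ₗ[ℤ] (Fin 3 → ℤ) where
  toFun x := ![x.1 1 + x.2 1, x.1 2, x.2 2]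
  map_add' p q := by funext i; fin_cases i <;> simp <;> ring
  map_smul' c p := by funext i; fin_cases i <;> simp [mul_add]

lemma psi_ker : Ksub ≤ LinearMap.ker psi := by
  rw [Ksub, Submodule.span_le]
  intro z hz
  rw [Set.mem_singleton_iff] at hz
  subst hz
  simp only [SetLike.mem_coe, LinearMap.mem_ker]
  show ![fvec 1 + (-fvec) 1, fvec 2, (-fvec) 2] = 0
  funext i
  fin_cases i <;> simp [fvec]

def phi : Lquot →ₗ[ℤ] (Fin 3 → ℤ) := Ksub.liftQ psi psi_ker

/-- The sublattice of simultaneous fixed elements of the divisor representation `L′`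
under `g₁` and `g₂` is free of rank 3 and equals the ℤ-span of the classes of `(f,0)`,
`(t,0)` and `(0,t)`.  These are the invariant divisor classes `φ, τ₁, τ₂` generating
`H²(X̃,ℤ)^G ≅ ℤ³`. -/
theorem invariant_divisor_classes :
    {y : Lquot | ∀ x : Wlat, Submodule.Quotient.mk x = y →
        Submodule.Quotient.mk (act g1mat x) = y ∧
        Submodule.Quotient.mk (act g2mat x) = y}
      = ↑(Submodule.span ℤ
          ({Submodule.Quotient.mk ((fvec, 0) : Wlat),
            Submodule.Quotient.mk ((tvec, 0) : Wlat),
            Submodule.Quotient.mk ((0, tvec) : Wlat)} : Set Lquot)) ∧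
    LinearIndependent ℤ
      ![(Submodule.Quotient.mk ((fvec, 0) : Wlat) : Lquot),
        Submodule.Quotient.mk ((tvec, 0) : Wlat),
        Submodule.Quotient.mk ((0, tvec) : Wlat)] := by
  have fix_span : ∀ w ∈ Submodule.span ℤ
      ({((fvec, 0) : Wlat), ((tvec, 0) : Wlat), ((0, tvec) : Wlat)} : Set Wlat),
      act g1mat w = w ∧ act g2mat w = w := by
    intro w hw
    induction hw using Submodule.span_induction with
    | mem z hz =>
      rcases hz with rfl | rfl | hz
      · constructor <;> simp [act, g1f, g2f, Matrix.mulVec_zero, Prod.ext_iff]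
      · constructor <;> simp [act, g1t, g2t, Matrix.mulVec_zero, Prod.ext_iff]
      · rw [Set.mem_singleton_iff] at hz; subst hz
        constructor <;> simp [act, g1t, g2t, Matrix.mulVec_zero, Prod.ext_iff]
    | zero => constructor <;> simp [act, Matrix.mulVec_zero, Prod.ext_iff]
    | add p q _ _ hp hq =>
      exact ⟨by rw [act_add, hp.1, hq.1], by rw [act_add, hp.2, hq.2]⟩
    | smul c p _ hp =>
      exact ⟨by rw [act_smul, hp.1], by rw [act_smul, hp.2]⟩
  have fixk1 : act g1mat ((fvec, -fvec) : Wlat) = (fvec, -fvec) := by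
    simp [act, g1f, Matrix.mulVec_neg, Prod.ext_iff]
  have fixk2 : act g2mat ((fvec, -fvec) : Wlat) = (fvec, -fvec) := by
    simp [act, g2f, Matrix.mulVec_neg, Prod.ext_iff]
  constructor
  · ext y
    simp only [Set.mem_setOf_eq, SetLike.mem_coe]
    constructor
    · intro hy
      obtain ⟨x, rfl⟩ := Submodule.Quotient.mk_surjective Ksub y
      obtain ⟨h1, h2⟩ := hy x rfl
      rw [Submodule.Quotient.eq] at h1 h2
      rw [Ksub, Submodule.mem_span_singleton] at h1 h2
      obtain ⟨a, ha⟩ := h1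
      obtain ⟨b, hb⟩ := h2
      have ha1 : g1mat.mulVec x.1 - x.1 = a • fvec := by
        have h := congrArg Prod.fst ha
        simpa [act] using h.symm
      have ha2 : g1mat.mulVec x.2 - x.2 = (-a) • fvec := by
        have h := congrArg Prod.snd ha
        simp only [act, Prod.smul_snd, Prod.snd_sub, smul_neg] at h
        rw [← neg_smul] at h
        exact h.symm
      have hb1 : g2mat.mulVec x.1 - x.1 = b • fvec := by
        have h := congrArg Prod.fst hb
        simpa [act] using h.symm
      have hb2 : g2mat.mulVec x.2 - x.2 = (-b) • fvec := by
        have h := congrArg Prod.snd hb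
        simp only [act, Prod.smul_snd, Prod.snd_sub, smul_neg] at h
        rw [← neg_smul] at h
        exact h.symm
      have hu := key x.1 a b ha1 hb1
      have hv := key x.2 (-a) (-b) ha2 hb2
      obtain ⟨A, B, hAB⟩ : ∃ A B, x.1 = A • fvec + B • tvec := ⟨_, _, hu⟩
      obtain ⟨C, D, hCD⟩ : ∃ C D, x.2 = C • fvec + D • tvec := ⟨_, _, hv⟩
      have hmk : (Submodule.Quotient.mk x : Lquot)
          = (A + C) • Submodule.Quotient.mk ((fvec, 0) : Wlat)
            + B • Submodule.Quotient.mk ((tvec, 0) : Wlat)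
            + D • Submodule.Quotient.mk ((0, tvec) : Wlat) := by
        rw [← Submodule.Quotient.mk_smul, ← Submodule.Quotient.mk_smul,
          ← Submodule.Quotient.mk_smul, ← Submodule.Quotient.mk_add,
          ← Submodule.Quotient.mk_add, Submodule.Quotient.eq, Ksub,
          Submodule.mem_span_singleton]
        refine ⟨-C, ?_⟩
        apply Prod.ext
        · simp only [Prod.smul_fst, Prod.fst_sub, Prod.fst_add, Prod.smul_snd]
          rw [hAB]
          module
        · simp only [Prod.smul_snd, Prod.snd_sub, Prod.snd_add, Prod.smul_fst]
          rw [hCD]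
          module
      rw [hmk]
      refine Submodule.add_mem _ (Submodule.add_mem _ (Submodule.smul_mem _ _ ?_)
        (Submodule.smul_mem _ _ ?_)) (Submodule.smul_mem _ _ ?_) <;>
        apply Submodule.subset_span <;> simp
    · intro hy x hx
      have himg : y ∈ Submodule.map Ksub.mkQ (Submodule.span ℤ
          ({((fvec, 0) : Wlat), ((tvec, 0) : Wlat), ((0, tvec) : Wlat)} : Set Wlat)) := by
        rw [Submodule.map_span]
        have : Ksub.mkQ '' {((fvec, 0) : Wlat), ((tvec, 0) : Wlat), ((0, tvec) : Wlat)}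
            = ({Submodule.Quotient.mk ((fvec, 0) : Wlat),
                Submodule.Quotient.mk ((tvec, 0) : Wlat),
                Submodule.Quotient.mk ((0, tvec) : Wlat)} : Set Lquot) := by
          simp [Set.image_insert_eq, Submodule.mkQ_apply]
        rw [this]
        exact hy
      obtain ⟨w, hw, hwy⟩ := himg
      have hxw : x - w ∈ Ksub := by
        rw [← Submodule.Quotient.eq]
        rw [hx]
        rw [Submodule.mkQ_apply] at hwy
        exact hwy.symm
      rw [Ksub, Submodule.mem_span_singleton] at hxw
      obtain ⟨d, hd⟩ := hxw
      have hx' : x = w + d • ((fvec, -fvec) : Wlat) := by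
        rw [hd]; abel
      have fx1 : act g1mat x = x := by
        rw [hx', act_add, act_smul, (fix_span w hw).1, fixk1]
      have fx2 : act g2mat x = x := by
        rw [hx', act_add, act_smul, (fix_span w hw).2, fixk2]
      exact ⟨by rw [fx1, hx], by rw [fx2, hx]⟩
  · apply LinearIndependent.of_comp phi
    have hcomp : (⇑phi ∘ ![(Submodule.Quotient.mk ((fvec, 0) : Wlat) : Lquot),
        Submodule.Quotient.mk ((tvec, 0) : Wlat),
        Submodule.Quotient.mk ((0, tvec) : Wlat)])
        = ![![1, 0, 0], ![-3, 1, 0], ![-3, 0, 1]] := by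
      funext i
      fin_cases i <;>
        simp only [Function.comp_apply, Matrix.cons_val_zero, Matrix.cons_val_one,
          Matrix.head_cons] <;>
        · show phi (Submodule.Quotient.mk _) = _
          rw [phi, Submodule.liftQ_apply]
          funext j
          fin_cases j <;> rfl
    rw [hcomp]
    rw [Fintype.linearIndependent_iff]
    intro g hg
    have h0 := congrFun hg 0
    have h1 := congrFun hg 1
    have h2 := congrFun hg 2
    simp only [Fin.sum_univ_three, Pi.add_apply, Pi.smul_apply, smul_eq_mul,
      Matrix.cons_val_zero, Matrix.cons_val_one, Matrix.head_cons, Pi.zero_apply,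
      Matrix.cons_val_two, Matrix.tail_cons] at h0 h1 h2
    intro i
    fin_cases i <;> simp <;> omega
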